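/- Multi-step unbiasedness of the importance-sampling tau-leap estimator: fix an initial state x_0 ∈ ℕ^d and admissible Markov controls δ_0,…,δ_{N−1} (each δ_k : ℕ^d → [0,∞)^J with δ_k(y) ∈ A_y for every y). Let X̂ be the tau-leap chain: X̂_0 = x_0 and, given X̂_k, the increment P_k is distributed as Poi((a_j(X̂_k)·Δt)_{j=1}^J) with X̂_{k+1} = Φ(X̂_k, P_k); let X̄ be the controlled chain: X̄_0 = x_0 and, given X̄_k, the increment P̄_k is distributed as Poi((δ_{k,j}(X̄_k)·Δt)_{j=1}^J) with X̄_{k+1} = Φ(X̄_k, P̄_k). Then for every function g : ℕ^d → [0,∞], E[ (Π_{k=0}^{N−1} L(X̄_k, δ_k(X̄_k), P̄_k)) · g(X̄_N) ] = E[ g(X̂_N) ], both sides understood as values in [0,∞]. -/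

import Mathlib

noncomputable section

open scoped BigOperators ENNReal
open Real

/-- `Φ(x,p) = max(0, x + ∑_j p_j ν_j)`, the componentwise maximum with `0`. -/
def Phi {d J : ℕ} (ν : Fin J → Fin d → ℤ) (x : Fin d → ℕ) (p : Fin J → ℕ) : Fin d → ℕ :=
  fun i => (max 0 ((x i : ℤ) + ∑ j, (p j : ℤ) * ν j i)).toNat

/-- Admissible control set at state `x`: `δ_j = 0` exactly when `a_j(x) = 0`, and
`δ_j > 0` otherwise. -/
def Adm {d J : ℕ} (a : Fin J → (Fin d → ℕ) → ℝ) (x : Fin d → ℕ) (δ : Fin J → ℝ) : Prop :=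
  ∀ j, (a j x = 0 → δ j = 0) ∧ (a j x ≠ 0 → 0 < δ j)

/-- Probability mass at `p` of the product Poisson distribution on `ℕ^J` with rate
vector `r`: `∏ j, e^{-r_j} r_j^{p_j} / p_j!` (with `0^0 = 1`). -/
def poiProb {J : ℕ} (r : Fin J → ℝ) (p : Fin J → ℕ) : ℝ :=
  ∏ j, Real.exp (-(r j)) * (r j) ^ (p j) / ((p j).factorial : ℝ)

/-- One-step likelihood ratio
`L(x,δ,p) = ∏_j e^{-(a_j(x) - δ_j) Δt} (a_j(x)/δ_j)^{p_j}`,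
with the convention `(a_j(x)/δ_j)^{p_j} := 1` when `a_j(x) = δ_j = 0`. -/
def lik {d J : ℕ} (a : Fin J → (Fin d → ℕ) → ℝ) (Δt : ℝ) (x : Fin d → ℕ)
    (δ : Fin J → ℝ) (p : Fin J → ℕ) : ℝ :=
  ∏ j, Real.exp (-(a j x - δ j) * Δt) *
    (if a j x = 0 ∧ δ j = 0 then 1 else (a j x / δ j) ^ (p j))

/-- Trajectory determined by the increments: `traj ν x P 0 = x` and
`traj ν x P (k+1) = Φ(traj ν x P k, P k)`. -/
def traj {d J : ℕ} (ν : Fin J → Fin d → ℤ) (x : Fin d → ℕ) (P : ℕ → Fin J → ℕ) :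
    ℕ → (Fin d → ℕ)
  | 0 => x
  | k + 1 => Phi ν (traj ν x P k) (P k)

/-- Extension of a finite increment sequence to `ℕ` (by zero). -/
def ext {J : ℕ} (m : ℕ) (P : Fin m → Fin J → ℕ) : ℕ → Fin J → ℕ :=
  fun k => if h : k < m then P ⟨k, h⟩ else 0

/-- **Multi-step unbiasedness of the importance-sampling tau-leap estimator.**
For the controlled chain `X̄` (increments `P̄_k ∼ Poi((δ_{k,j}(X̄_k) Δt)_j)`) and the
tau-leap chain `X̂` (increments `P_k ∼ Poi((a_j(X̂_k) Δt)_j)`), both started at `x₀`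
and both evolving by `Φ`, and for every `g : ℕ^d → [0,∞]`:
`E[ (∏_{k=0}^{N-1} L(X̄_k, δ_k(X̄_k), P̄_k)) · g(X̄_N) ] = E[ g(X̂_N) ]`.
Both expectations are written as sums over increment paths of length `N`. -/

lemma poiProb_nonneg {J : ℕ} {r : Fin J → ℝ} (hr : ∀ j, 0 ≤ r j) (p : Fin J → ℕ) :
    0 ≤ poiProb r p := by
  apply Finset.prod_nonneg
  intro j _
  have := hr j
  positivity

lemma lik_nonneg {d J : ℕ} {a : Fin J → (Fin d → ℕ) → ℝ} (ha : ∀ j x, 0 ≤ a j x)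
    {Δt : ℝ} {x : Fin d → ℕ} {δ : Fin J → ℝ} (hδ : ∀ j, 0 ≤ δ j) (p : Fin J → ℕ) :
    0 ≤ lik a Δt x δ p := by
  apply Finset.prod_nonneg
  intro j _
  apply mul_nonneg (le_of_lt (Real.exp_pos _))
  split
  · norm_num
  · exact pow_nonneg (div_nonneg (ha j x) (hδ j)) _

lemma step_eq {d J : ℕ} {a : Fin J → (Fin d → ℕ) → ℝ} (ha : ∀ j x, 0 ≤ a j x)
    {Δt : ℝ} (hΔt : 0 < Δt) {x : Fin d → ℕ} {δ : Fin J → ℝ} (hδ : Adm a x δ)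
    (p : Fin J → ℕ) :
    poiProb (fun j => δ j * Δt) p * lik a Δt x δ p
      = poiProb (fun j => a j x * Δt) p := by
  unfold poiProb lik
  rw [← Finset.prod_mul_distrib]
  apply Finset.prod_congr rfl
  intro j _
  have hexp : Real.exp (-(δ j * Δt)) * Real.exp (-(a j x - δ j) * Δt)
      = Real.exp (-(a j x * Δt)) := by
    rw [← Real.exp_add]; ring_nf
  by_cases h : a j x = 0
  · have hδ0 : δ j = 0 := (hδ j).1 h
    simp [h, hδ0]
  · have hδpos : 0 < δ j := (hδ j).2 h
    rw [if_neg (by tauto)]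
    have hpow : (δ j * Δt) ^ p j * (a j x / δ j) ^ p j = (a j x * Δt) ^ p j := by
      rw [← mul_pow]
      congr 1
      field_simp
    rw [← hexp, ← hpow]
    ring

theorem multi_step_unbiasedness_IS_tau_leap
    {d J : ℕ} (ν : Fin J → Fin d → ℤ) (a : Fin J → (Fin d → ℕ) → ℝ)
    (ha : ∀ j x, 0 ≤ a j x) (Δt : ℝ) (hΔt : 0 < Δt) (N : ℕ)
    (x₀ : Fin d → ℕ)
    (D : ℕ → (Fin d → ℕ) → Fin J → ℝ) (hD : ∀ k y, Adm a y (D k y))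
    (g : (Fin d → ℕ) → ℝ≥0∞) :
    (∑' P : Fin N → Fin J → ℕ,
        (∏ k : Fin N,
            ENNReal.ofReal
              (poiProb (fun j => D k (traj ν x₀ (ext N P) k) j * Δt) (P k))) *
          (ENNReal.ofReal
              (∏ k : Fin N,
                lik a Δt (traj ν x₀ (ext N P) k) (D k (traj ν x₀ (ext N P) k)) (P k)) *
            g (traj ν x₀ (ext N P) N)))
      =
    ∑' P : Fin N → Fin J → ℕ,
      (∏ k : Fin N,
          ENNReal.ofReal
            (poiProb (fun j => a j (traj ν x₀ (ext N P) k) * Δt) (P k))) *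
        g (traj ν x₀ (ext N P) N) := by
  apply tsum_congr
  intro P
  set T := traj ν x₀ (ext N P)
  have hδnn : ∀ k j, 0 ≤ D k (T k) j := by
    intro k j
    rcases (hD k (T k)) j with ⟨h0, hp⟩
    by_cases h : a j (T k) = 0
    · simp [h0 h]
    · exact le_of_lt (hp h)
  have hpoi : ∀ k : Fin N, 0 ≤ poiProb (fun j => D k (T k) j * Δt) (P k) := by
    intro k
    exact poiProb_nonneg (fun j => mul_nonneg (hδnn k j) hΔt.le) _
  have h1 : (∏ k : Fin N,
      ENNReal.ofReal (poiProb (fun j => D k (T k) j * Δt) (P k)))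
      = ENNReal.ofReal (∏ k : Fin N, poiProb (fun j => D k (T k) j * Δt) (P k)) := by
    rw [← ENNReal.ofReal_prod_of_nonneg (fun k _ => hpoi k)]
  have h2 : (∏ k : Fin N,
      ENNReal.ofReal (poiProb (fun j => a j (T k) * Δt) (P k)))
      = ENNReal.ofReal (∏ k : Fin N, poiProb (fun j => a j (T k) * Δt) (P k)) := by
    rw [← ENNReal.ofReal_prod_of_nonneg
      (fun k _ => poiProb_nonneg (fun j => mul_nonneg (ha j _) hΔt.le) _)]
  rw [h1, h2, ← mul_assoc, ← ENNReal.ofReal_mul (Finset.prod_nonneg fun k _ => hpoi k),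
    ← Finset.prod_mul_distrib]
  congr 2
  apply Finset.prod_congr rfl
  intro k _
  exact step_eq ha hΔt (hD k (T k)) (P k)
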